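/- Every tree admits a 3-track layout. -/

import Mathlib

/-!
Root the tree and put every vertex on the layer given by its depth. Within a layer,
order the vertices lexicographically by their root paths (written as lists of labels). Every
edge joins consecutive layers, and a child's root path extends its parent's, so between two
consecutive layers the order of the children follows the order of the parents: no two edges
cross. Taking depth mod 3 as the track, two edges whose ends lie on the same two tracks either
join the same two layers, or the ordering by depth already forbids an X-crossing.
-/

open SimpleGraph Finset

theorem List.Lex.append_of_length_eq {α : Type*} {r : α → α → Prop} {l₁ l₂ : List α}
    (h : List.Lex r l₁ l₂) (hlen : l₁.length = l₂.length) (s₁ s₂ : List α) :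
    List.Lex r (l₁ ++ s₁) (l₂ ++ s₂) := by
  induction h with
  | nil => simp at hlen
  | cons _ ih => exact .cons (ih (by simpa using hlen))
  | rel hab => exact .rel hab

theorem exists_nat_lt_iff_lt {V α : Type*} [Fintype V] [LinearOrder α] (key : V → α) :
    ∃ f : V → ℕ, ∀ u v, f u < f v ↔ key u < key v := by
  classical
  refine ⟨fun v => #{w | key w < key v}, fun u v => ⟨fun h => ?_, fun h => ?_⟩⟩
  · by_contra! hvu
    refine h.not_ge (card_le_card fun w => ?_)
    simpa using fun hw => hw.trans_le hvu
  · refine card_lt_card ⟨fun w => ?_, fun hsub => ?_⟩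
    · simpa using fun hw => hw.trans h
    · have huu := hsub (by simpa using h)
      simp at huu

namespace SimpleGraph

variable {V ι α β : Type*}

def IsTrackLayout [LT α] (G : SimpleGraph V) (t : V → ι) (f : V → α) : Prop :=
  Function.Injective f ∧ (∀ u v, G.Adj u v → t u ≠ t v) ∧
    ∀ a b a' b' : V, G.Adj a b → G.Adj a' b' → t a = t a' → t b = t b' →
      ¬ (f a < f a' ∧ f b' < f b)

theorem IsTrackLayout.of_lt_iff [LinearOrder α] [Preorder β] {G : SimpleGraph V} {t : V → ι}
    {key : V → α} (h : G.IsTrackLayout t key) {f : V → β}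
    (hf : ∀ u v, f u < f v ↔ key u < key v) : G.IsTrackLayout t f := by
  obtain ⟨hinj, hproper, hcross⟩ := h
  refine ⟨fun u v huv => hinj ?_, hproper, fun a b a' b' hab ha'b' hta htb => ?_⟩
  · refine le_antisymm (not_lt.mp fun hvu => ?_) (not_lt.mp fun huv' => ?_)
    · exact ((hf v u).mpr hvu).ne huv.symm
    · exact ((hf u v).mpr huv').ne huv
  · rw [hf, hf]
    exact hcross a b a' b' hab ha'b' hta htb

theorem isTrackLayout_of_layering [LinearOrder α] {G : SimpleGraph V} {d : V → ℕ}
    {key : V → α} (hinj : Function.Injective key)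
    (hadj : ∀ u v, G.Adj u v → d v = d u + 1 ∨ d u = d v + 1)
    (hlevel : ∀ u v, d u < d v → key u < key v)
    (hplanar : ∀ a b a' b', G.Adj a b → G.Adj a' b' → d b = d a + 1 → d b' = d a' + 1 →
      d a = d a' → key a < key a' → ¬ key b' < key b) :
    G.IsTrackLayout (fun v => Fin.ofNat 3 (d v)) key := by
  simp only [IsTrackLayout, ne_eq, Fin.ext_iff, Fin.val_ofNat]
  refine ⟨hinj, fun u v huv => by have := hadj u v huv; omega,
    fun a b a' b' hab ha'b' hta htb ⟨hkey, hkey'⟩ => ?_⟩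
  have hda : d a ≤ d a' := not_lt.mp fun h => (hlevel a' a h).asymm hkey
  have hdb : d b' ≤ d b := not_lt.mp fun h => (hlevel b b' h).asymm hkey'
  rcases hadj a b hab with h | h <;> rcases hadj a' b' ha'b' with h' | h'
  · exact hplanar a b a' b' hab ha'b' h h' (by omega) hkey hkey'
  -- one edge goes down a layer and the other up, impossible on the same tracks as 1 ≢ -1 (mod 3)
  · omega
  · omega
  · exact hplanar b' a' b a ha'b'.symm hab.symm h' h (by omega) hkey' hkey

theorem IsAcyclic.eq_concat_or_eq_concat_of_adj {G : SimpleGraph V} (hG : G.IsAcyclic) {r : V}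
    {p : ∀ v, G.Walk r v} (hp : ∀ v, (p v).IsPath) {u v : V} (h : G.Adj u v) :
    p v = (p u).concat h ∨ p u = (p v).concat h.symm := by
  by_cases hu : u ∈ (p v).support
  · exact .inl (hG.path_concat (hp u) (hp v) h hu)
  · exact .inr (hG.path_concat (hp v) (hp u) h.symm
      (hG.mem_support_of_ne_mem_support_of_adj_of_isPath (hp u) (hp v) h hu))

section BFSOrder

variable {G : SimpleGraph V} {r : V} (p : ∀ v, G.Walk r v) (g : V → ℕ)

def bfsKey (v : V) : ℕ ×ₗ List ℕ :=
  toLex ((p v).length, (p v).support.map g)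

variable {p g}

theorem bfsKey_injective (hg : Function.Injective g) : Function.Injective (bfsKey p g) := by
  intro u v huv
  have hsupp : (p u).support = (p v).support :=
    List.map_injective_iff.mpr hg (congrArg (·.2) (toLex.injective huv))
  rw [← (p u).getLast_support, ← (p v).getLast_support]
  simp only [hsupp]

theorem isTrackLayout_bfsKey (hG : G.IsAcyclic) (hp : ∀ v, (p v).IsPath)
    (hg : Function.Injective g) :
    G.IsTrackLayout (fun v => Fin.ofNat 3 (p v).length) (bfsKey p g) := by
  have hdepth : ∀ u v (h : G.Adj u v), (p v).length = (p u).length + 1 →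
      p v = (p u).concat h := fun u v h hlen =>
    (hG.eq_concat_or_eq_concat_of_adj hp h).resolve_right fun h' => by
      rw [h', Walk.length_concat] at hlen
      omega
  refine isTrackLayout_of_layering (bfsKey_injective hg) (fun u v h => ?_)
    (fun u v h => Prod.Lex.toLex_lt_toLex.mpr (.inl h)) ?_
  · rcases hG.eq_concat_or_eq_concat_of_adj hp h with h' | h' <;>
      simp [h', Walk.length_concat]
  · intro a b a' b' hab ha'b' hb hb' hd hkey
    rw [bfsKey, bfsKey, Prod.Lex.toLex_lt_toLex] at hkey
    have hsupp : (p a).support.map g < (p a').support.map g := (hkey.resolve_left (by omega)).2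
    refine (Prod.Lex.toLex_lt_toLex.mpr (.inr ⟨by omega, ?_⟩)).asymm
    rw [hdepth a b hab hb, hdepth a' b' ha'b' hb', Walk.support_concat, Walk.support_concat,
      List.map_append, List.map_append]
    exact List.Lex.append_of_length_eq hsupp (by simp [Walk.length_support, hd]) _ _

end BFSOrder

end SimpleGraph

/-- Every tree admits a 3-track layout: a partition of the vertices into three
independent tracks, each linearly ordered (via `f`), such that between every
pair of tracks no two edges X-cross. -/
theorem stmt11 {V : Type*} [Fintype V] (G : SimpleGraph V) (hT : G.IsTree) :
    ∃ (t : V → Fin 3) (f : V → ℕ), Function.Injective f ∧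
      (∀ u v, G.Adj u v → t u ≠ t v) ∧
      (∀ a b a' b' : V, G.Adj a b → G.Adj a' b' → t a = t a' → t b = t b' →
        ¬ (f a < f a' ∧ f b' < f b)) := by
  obtain ⟨r⟩ := hT.connected.nonempty
  choose p hp using fun v => (hT.connected r v).exists_isPath
  obtain ⟨g, hg⟩ := Countable.exists_injective_nat V
  obtain ⟨f, hf⟩ := exists_nat_lt_iff_lt (bfsKey p g)
  exact ⟨_, f, (isTrackLayout_bfsKey hT.isAcyclic hp hg).of_lt_iff hf⟩
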